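/- Let A and B be abelian groups. The map T sending a triple (f, γ_A, γ_B), where f : A ⊗ B → ℝ/ℤ is a group homomorphism and γ_A ∈ Quad(A, ℝ/ℤ), γ_B ∈ Quad(B, ℝ/ℤ), to the function (a,b) ↦ f(a ⊗ b) + γ_A(a) + γ_B(b) is a group isomorphism from Hom(A ⊗ B, ℝ/ℤ) ⊕ Quad(A, ℝ/ℤ) ⊕ Quad(B, ℝ/ℤ) onto Quad(A ⊕ B, ℝ/ℤ). -/

import Mathlib

variable {A B : Type*} [AddCommGroup A] [AddCommGroup B]

/-- The polarization of a map between abelian groups. -/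
def polz (γ : A → B) (x y : A) : B := γ (x + y) - γ x - γ y

/-- A quadratic form between abelian groups: even, with bilinear polarization. -/
def IsQuadratic (γ : A → B) : Prop :=
  (∀ a, γ a = γ (-a)) ∧
  (∀ x x' y, polz γ (x + x') y = polz γ x y + polz γ x' y) ∧
  (∀ x y y', polz γ x (y + y') = polz γ x y + polz γ x y')

lemma polz_add_fun (f g : A → B) (x y : A) :
    polz (f + g) x y = polz f x y + polz g x y := by
  simp only [polz, Pi.add_apply]; abel

lemma polz_neg_fun (f : A → B) (x y : A) :
    polz (-f) x y = - polz f x y := by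
  simp only [polz, Pi.neg_apply]; abel

/-- The group of `ℝ/ℤ`-valued quadratic forms on `A`. -/
noncomputable def QuadGroup (A : Type*) [AddCommGroup A] : AddSubgroup (A → AddCircle (1 : ℝ)) where
  carrier := {γ | IsQuadratic γ}
  zero_mem' := ⟨fun _ => rfl, fun _ _ _ => by simp [polz], fun _ _ _ => by simp [polz]⟩
  add_mem' := by
    rintro f g ⟨hf1, hf2, hf3⟩ ⟨hg1, hg2, hg3⟩
    refine ⟨fun a => by simp only [Pi.add_apply, hf1 a, hg1 a], fun x x' y => ?_,
      fun x y y' => ?_⟩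
    · rw [polz_add_fun, polz_add_fun, polz_add_fun, hf2, hg2]; abel
    · rw [polz_add_fun, polz_add_fun, polz_add_fun, hf3, hg3]; abel
  neg_mem' := by
    rintro f ⟨hf1, hf2, hf3⟩
    refine ⟨fun a => by simp only [Pi.neg_apply, hf1 a], fun x x' y => ?_, fun x y y' => ?_⟩
    · rw [polz_neg_fun, polz_neg_fun, polz_neg_fun, hf2]; abel
    · rw [polz_neg_fun, polz_neg_fun, polz_neg_fun, hf3]; abel

/-!
The inverse map: a quadratic form `γ` on `A × B` satisfies
`γ (a, b) = polz γ (a, 0) (0, b) + γ (a, 0) + γ (0, b)`, and the cross polarization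
`(a, b) ↦ polz γ (a, 0) (0, b)` is biadditive, so it factors through `A ⊗ B`. Conversely the cross
polarization of `(a, b) ↦ f (a ⊗ b) + γA a + γB b` is `f`, since quadratic forms vanish at `0`.
-/

open TensorProduct

section Quadratic

variable {A' C : Type*} [AddCommGroup A'] [AddCommGroup C] {γ : A → C}

lemma IsQuadratic.map_zero (h : IsQuadratic γ) : γ 0 = 0 := by
  have h0 := h.2.1 0 0 0
  simp only [polz, add_zero, sub_self, zero_sub] at h0
  simpa using h0

lemma polz_comp (γ : A → C) (φ : A' →+ A) (x y : A') :
    polz (γ ∘ φ) x y = polz γ (φ x) (φ y) := by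
  simp only [polz, Function.comp_apply, map_add]

lemma IsQuadratic.comp (h : IsQuadratic γ) (φ : A' →+ A) : IsQuadratic (γ ∘ φ) :=
  ⟨fun a => by simp only [Function.comp_apply, map_neg, ← h.1],
    fun x x' y => by simp only [polz_comp, map_add, h.2.1],
    fun x y y' => by simp only [polz_comp, map_add, h.2.2]⟩

def IsQuadratic.polarHom (h : IsQuadratic γ) : A →+ A →+ C :=
  AddMonoidHom.mk' (fun x => AddMonoidHom.mk' (polz γ x) (h.2.2 x))
    fun x x' => AddMonoidHom.ext (h.2.1 x x')

end Quadratic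

section Prod

variable {C : Type*} [AddCommGroup C]

def quadOnProd (f : A ⊗[ℤ] B →+ C) (γA : A → C) (γB : B → C) : A × B → C :=
  fun p => f (p.1 ⊗ₜ p.2) + γA p.1 + γB p.2

lemma quadOnProd_add (f f' : A ⊗[ℤ] B →+ C) (γA γA' : A → C) (γB γB' : B → C) :
    quadOnProd (f + f') (γA + γA') (γB + γB') = quadOnProd f γA γB + quadOnProd f' γA' γB' := by
  funext p
  simp only [quadOnProd, AddMonoidHom.add_apply, Pi.add_apply]
  abel

lemma polz_quadOnProd (f : A ⊗[ℤ] B →+ C) (γA : A → C) (γB : B → C) (x y : A × B) :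
    polz (quadOnProd f γA γB) x y =
      f (x.1 ⊗ₜ y.2) + f (y.1 ⊗ₜ x.2) + polz γA x.1 y.1 + polz γB x.2 y.2 := by
  simp only [polz, quadOnProd, Prod.fst_add, Prod.snd_add, add_tmul, tmul_add, map_add]
  abel

lemma isQuadratic_quadOnProd (f : A ⊗[ℤ] B →+ C) {γA : A → C} {γB : B → C}
    (hA : IsQuadratic γA) (hB : IsQuadratic γB) : IsQuadratic (quadOnProd f γA γB) :=
  ⟨fun p => by
      simp only [quadOnProd, Prod.fst_neg, Prod.snd_neg, neg_tmul, tmul_neg, neg_neg,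
        ← hA.1, ← hB.1],
    fun x x' y => by
      simp only [polz_quadOnProd, Prod.fst_add, Prod.snd_add, add_tmul, tmul_add, map_add,
        hA.2.1, hB.2.1]
      abel,
    fun x y y' => by
      simp only [polz_quadOnProd, Prod.fst_add, Prod.snd_add, add_tmul, tmul_add, map_add,
        hA.2.2, hB.2.2]
      abel⟩

variable {γ : A × B → C}

def IsQuadratic.crossHom (h : IsQuadratic γ) : A ⊗[ℤ] B →+ C :=
  liftAddHom ((h.polarHom.comp (AddMonoidHom.inl A B)).compl₂ (AddMonoidHom.inr A B))
    fun r a b => by simp only [AddMonoidHom.compl₂_apply, map_zsmul, AddMonoidHom.smul_apply]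

@[simp] lemma IsQuadratic.crossHom_tmul (h : IsQuadratic γ) (a : A) (b : B) :
    h.crossHom (a ⊗ₜ b) = polz γ (a, 0) (0, b) := rfl

lemma IsQuadratic.quadOnProd_crossHom (h : IsQuadratic γ) :
    quadOnProd h.crossHom (γ ∘ AddMonoidHom.inl A B) (γ ∘ AddMonoidHom.inr A B) = γ := by
  funext ⟨a, b⟩
  simp only [quadOnProd, crossHom_tmul, polz, Function.comp_apply,
    AddMonoidHom.inl_apply, AddMonoidHom.inr_apply, Prod.mk_add_mk, add_zero, zero_add]
  abel

variable (f : A ⊗[ℤ] B →+ C) {γA : A → C} {γB : B → C}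

lemma quadOnProd_comp_inl (hB : IsQuadratic γB) :
    quadOnProd f γA γB ∘ AddMonoidHom.inl A B = γA := by
  funext a
  simp [quadOnProd, hB.map_zero]

lemma quadOnProd_comp_inr (hA : IsQuadratic γA) :
    quadOnProd f γA γB ∘ AddMonoidHom.inr A B = γB := by
  funext b
  simp [quadOnProd, hA.map_zero]

lemma crossHom_quadOnProd (hA : IsQuadratic γA) (hB : IsQuadratic γB) :
    (isQuadratic_quadOnProd f hA hB).crossHom = f :=
  AddMonoidHom.ext fun x => x.induction_on (by simp only [map_zero])
    (fun a b => by
      rw [IsQuadratic.crossHom_tmul, polz_quadOnProd]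
      simp [polz, hA.map_zero, hB.map_zero])
    fun x y hx hy => by rw [map_add, map_add, hx, hy]

end Prod

variable (A B) in
noncomputable def quadProdEquiv :
    ((A ⊗[ℤ] B →+ AddCircle (1 : ℝ)) × QuadGroup A × QuadGroup B) ≃+ QuadGroup (A × B) :=
  AddEquiv.mk'
    { toFun := fun t => ⟨quadOnProd t.1 t.2.1 t.2.2, isQuadratic_quadOnProd t.1 t.2.1.2 t.2.2.2⟩
      invFun := fun γ => (γ.2.crossHom, ⟨_, γ.2.comp (AddMonoidHom.inl A B)⟩,
        ⟨_, γ.2.comp (AddMonoidHom.inr A B)⟩)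
      left_inv := fun ⟨f, γA, γB⟩ => by
        ext1
        · exact crossHom_quadOnProd f γA.2 γB.2
        · ext1
          · exact Subtype.ext (quadOnProd_comp_inl f γB.2)
          · exact Subtype.ext (quadOnProd_comp_inr f γA.2)
      right_inv := fun γ => Subtype.ext γ.2.quadOnProd_crossHom }
    fun _ _ => Subtype.ext (quadOnProd_add ..)

open TensorProduct in
/-- `Hom(A⊗B, ℝ/ℤ) ⊕ Quad(A, ℝ/ℤ) ⊕ Quad(B, ℝ/ℤ) ≅ Quad(A⊕B, ℝ/ℤ)` via
`(f, γ_A, γ_B) ↦ ((a,b) ↦ f(a⊗b) + γ_A(a) + γ_B(b))`. -/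
theorem quad_of_direct_sum_iso (A B : Type*) [AddCommGroup A] [AddCommGroup B] :
    ∃ e : ((TensorProduct ℤ A B →+ AddCircle (1 : ℝ)) × QuadGroup A × QuadGroup B) ≃+
        QuadGroup (A × B),
      ∀ (f : TensorProduct ℤ A B →+ AddCircle (1 : ℝ)) (γA : QuadGroup A)
        (γB : QuadGroup B) (a : A) (b : B),
        ((e (f, γA, γB) : (A × B) → AddCircle (1 : ℝ)) (a, b)) =
          f (a ⊗ₜ[ℤ] b) + (γA : A → AddCircle (1 : ℝ)) a + (γB : B → AddCircle (1 : ℝ)) b :=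
  ⟨quadProdEquiv A B, fun _ _ _ _ _ => rfl⟩
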